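/- arXiv:2405.12016 — 2 statements merged into one kernel-verified Lean document; each statement's English description precedes it below -/
import Mathlib

section
/- Let $e_1,\dots,e_n,e_{n+1}$ be exchangeable real-valued random variables (e.g., i.i.d.). Let $\hat q$ be the $\lceil (n+1)(1-\alpha)\rceil$-th smallest value among $e_1,\dots,e_n$ (assuming $\lceil (n+1)(1-\alpha)\rceil \le n$). Then $\mathbb{P}[e_{n+1} \le \hat q] \ge 1-\alpha$. -/
open MeasureTheory ProbabilityTheory

/-- The `k`-th smallest element of a list of reals (1-indexed). -/
noncomputable def orderStat (l : List ℝ) (k : ℕ) : ℝ :=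
  (l.insertionSort (· ≤ ·)).getD (k - 1) 0

/-- A finite family of real random variables is exchangeable if its joint law
is invariant under permutations of the indices. -/
def Exchangeable {Ω : Type*} [MeasureSpace Ω] {m : ℕ} (e : Fin m → Ω → ℝ) : Prop :=
  ∀ σ : Equiv.Perm (Fin m),
    Measure.map (fun ω => fun i => e (σ i) ω) (ℙ : Measure Ω) =
      Measure.map (fun ω => fun i => e i ω) (ℙ : Measure Ω)

open Finset

/-!
Call an index `i` *low* if fewer than `k` of the scores lie strictly below `e i`. Whatever the
values (ties only lower strict ranks), at least `k` of the `n + 1` indices are low, so the `n + 1`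
probabilities of being low sum to at least `k`; by exchangeability they are all equal, hence the
last index is low with probability at least `k / (n + 1) ≥ 1 - α`. When the last index is low,
fewer than `k` of the first `n` scores lie below `e (Fin.last n)`, so it is at most their `k`-th
smallest value.
-/

theorem List.countP_ofFn {α : Type*} {m : ℕ} (f : Fin m → α) (p : α → Prop)
    [DecidablePred p] :
    (List.ofFn f).countP (fun a => decide (p a)) = #{i | p (f i)} := by
  rw [← Multiset.coe_countP, ← Fin.univ_val_map, Multiset.countP_map, Finset.card_def,
    Finset.filter_val]

theorem le_orderStat_of_countP_lt {l : List ℝ} {k : ℕ} (hkl : k ≤ l.length) {x : ℝ}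
    (h : l.countP (· < x) < k) : x ≤ orderStat l k := by
  by_contra! hx
  set s := l.insertionSort (· ≤ ·)
  have hperm : s.Perm l := List.perm_insertionSort _ l
  have hsorted : s.Pairwise (· ≤ ·) := List.pairwise_insertionSort _ l
  have hk : k - 1 < s.length := by rw [hperm.length_eq]; omega
  have hx' : s[k - 1] < x := by rwa [orderStat, List.getD_eq_getElem _ _ hk] at hx
  have hlt : ∀ a ∈ s.take k, a < x := by
    intro a ha
    obtain ⟨i, hi, rfl⟩ := List.getElem_of_mem ha
    simp only [List.length_take, lt_min_iff] at hi
    rw [List.getElem_take]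
    exact lt_of_le_of_lt (hsorted.rel_get_of_le
      (a := ⟨i, by omega⟩) (b := ⟨k - 1, hk⟩) (by simp [Fin.le_def]; omega)) hx'
  have : k ≤ l.countP (· < x) := calc
    k = (s.take k).length := by simp; omega
    _ = (s.take k).countP (· < x) := (List.countP_eq_length.mpr (by simpa using hlt)).symm
    _ ≤ s.countP (· < x) := (List.take_sublist k s).countP_le
    _ = l.countP (· < x) := hperm.countP_eq _
  omega

section StrictRank

variable {ι α : Type*} [Fintype ι] [LinearOrder α]

def strictRank (v : ι → α) (i : ι) : ℕ := #{j | v j < v i}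

theorem strictRank_comp_perm (v : ι → α) (σ : Equiv.Perm ι) (i : ι) :
    strictRank (v ∘ σ) i = strictRank v (σ i) :=
  card_equiv σ (by simp)

theorem le_card_strictRank_lt {k : ℕ} (hk : k ≤ Fintype.card ι) (v : ι → α) :
    k ≤ #{i | strictRank v i < k} := by
  by_contra! hlt
  have hU : ({i | ¬strictRank v i < k} : Finset ι).Nonempty := by
    rw [← card_pos]
    have := card_filter_add_card_filter_not (s := univ) fun i => strictRank v i < k
    rw [card_univ] at this
    omega
  obtain ⟨i₀, hi₀, hmin⟩ := exists_min_image _ v hU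
  have hbelow : ({j | v j < v i₀} : Finset ι) ⊆ ({i | strictRank v i < k} : Finset ι) :=
    fun j hj => by
      simp only [mem_filter, mem_univ, true_and] at hj ⊢
      by_contra hjk
      exact (hmin j (by simpa using hjk)).not_gt hj
  exact (mem_filter.mp hi₀).2 ((card_le_card hbelow).trans_lt hlt)

theorem measurable_strictRank [MeasurableSpace α] [TopologicalSpace α] [OpensMeasurableSpace α]
    [SecondCountableTopology α] [OrderClosedTopology α] (i : ι) :
    Measurable fun v : ι → α => strictRank v i := by
  simp only [strictRank, card_filter]
  exact Finset.measurable_sum _ fun j _ => Measurable.ite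
    (measurableSet_lt (measurable_pi_apply j) (measurable_pi_apply i)) measurable_const
    measurable_const

end StrictRank

theorem le_orderStat_init_of_strictRank_last_lt {n k : ℕ} (hkn : k ≤ n)
    (v : Fin (n + 1) → ℝ) (h : strictRank v (Fin.last n) < k) :
    v (Fin.last n) ≤ orderStat (List.ofFn fun i : Fin n => v i.castSucc) k := by
  refine le_orderStat_of_countP_lt (by simpa using hkn) (lt_of_le_of_lt ?_ h)
  rw [strictRank, ← List.countP_ofFn v (· < v (Fin.last n)), List.ofFn_succ' v,
    List.concat_eq_append]
  exact (List.sublist_append_left _ _).countP_le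

theorem ENNReal.ofReal_le_natCeil_mul_div (x : ℝ) {m : ℕ} (hm : m ≠ 0) :
    ENNReal.ofReal x ≤ ⌈m * x⌉₊ / m := calc
  ENNReal.ofReal x ≤ ENNReal.ofReal (⌈m * x⌉₊ / m) := by
    refine ENNReal.ofReal_le_ofReal ?_
    rw [le_div_iff₀ (by positivity), mul_comm]
    exact Nat.le_ceil _
  _ = ⌈m * x⌉₊ / m := by
    rw [ENNReal.ofReal_div_of_pos (by positivity)]
    norm_cast

theorem natCast_mul_measure_univ_le_sum {Ω ι : Type*} [MeasurableSpace Ω] [Fintype ι]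
    (μ : Measure Ω) {A : ι → Set Ω} [∀ i, DecidablePred (· ∈ A i)]
    (hA : ∀ i, MeasurableSet (A i)) {k : ℕ} (hk : ∀ ω, k ≤ #{i | ω ∈ A i}) :
    k * μ Set.univ ≤ ∑ i, μ (A i) := calc
  k * μ Set.univ = ∫⁻ _, (k : ENNReal) ∂μ := (lintegral_const _).symm
  _ ≤ ∫⁻ ω, ∑ i, (A i).indicator 1 ω ∂μ := lintegral_mono fun ω => by
    simpa [Set.indicator_apply, sum_boole] using hk ω
  _ = ∑ i, μ (A i) := by
    rw [lintegral_finsetSum _ fun i _ => measurable_one.indicator (hA i)]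
    simp [lintegral_indicator_one (hA _)]

namespace Exchangeable

variable {Ω : Type*} [MeasureSpace Ω] {m : ℕ} {e : Fin m → Ω → ℝ}

theorem measure_preimage_perm (hexch : Exchangeable e) (hmeas : ∀ i, Measurable (e i))
    (σ : Equiv.Perm (Fin m)) {S : Set (Fin m → ℝ)} (hS : MeasurableSet S) :
    ℙ ((fun ω i => e (σ i) ω) ⁻¹' S) = ℙ ((fun ω i => e i ω) ⁻¹' S) := by
  rw [← Measure.map_apply (by fun_prop) hS, hexch σ, Measure.map_apply (by fun_prop) hS]

theorem measure_strictRank_lt_eq (hexch : Exchangeable e) (hmeas : ∀ i, Measurable (e i))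
    (k : ℕ) (i j : Fin m) :
    ℙ {ω | strictRank (e · ω) i < k} = ℙ {ω | strictRank (e · ω) j < k} := by
  calc ℙ {ω | strictRank (e · ω) i < k}
      = ℙ ((fun ω l => e (Equiv.swap i j l) ω) ⁻¹' {v | strictRank v j < k}) := by
        congr 1; ext ω
        rw [Set.mem_preimage, Set.mem_ofPred_eq, Set.mem_ofPred_eq,
          show (fun l => e (Equiv.swap i j l) ω) = (e · ω) ∘ Equiv.swap i j from rfl,
          strictRank_comp_perm, Equiv.swap_apply_right]
    _ = ℙ {ω | strictRank (e · ω) j < k} :=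
      hexch.measure_preimage_perm hmeas _ (measurable_strictRank j measurableSet_Iio)

end Exchangeable

theorem conformal_coverage_lower_general
    {Ω : Type*} [MeasureSpace Ω] [IsProbabilityMeasure (ℙ : Measure Ω)]
    {n : ℕ} (α : ℝ)
    (e : Fin (n + 1) → Ω → ℝ) (hmeas : ∀ i, Measurable (e i))
    (hexch : Exchangeable e)
    (k : ℕ) (hk : k = ⌈((n : ℝ) + 1) * (1 - α)⌉₊) (hkn : k ≤ n)
    (qhat : Ω → ℝ)
    (hq : ∀ ω, qhat ω = orderStat (List.ofFn (fun i : Fin n => e i.castSucc ω)) k) :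
    ENNReal.ofReal (1 - α) ≤ ℙ {ω | e (Fin.last n) ω ≤ qhat ω} := by
  set A : Fin (n + 1) → Set Ω := fun i => {ω | strictRank (e · ω) i < k}
  have hA : ∀ i, MeasurableSet (A i) := fun i =>
    measurable_pi_lambda _ hmeas (measurable_strictRank i measurableSet_Iio)
  have hmass : (k : ENNReal) ≤ (n + 1) * ℙ (A (Fin.last n)) := calc
    (k : ENNReal) = k * ℙ Set.univ := by simp
    _ ≤ ∑ i, ℙ (A i) := natCast_mul_measure_univ_le_sum ℙ hA fun ω =>
      le_card_strictRank_lt (k := k) (by simp; omega) (e · ω)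
    _ = (n + 1) * ℙ (A (Fin.last n)) := by
      simp [A, hexch.measure_strictRank_lt_eq hmeas k _ (Fin.last n)]
  have hcover : A (Fin.last n) ⊆ {ω | e (Fin.last n) ω ≤ qhat ω} := fun ω hω => by
    rw [Set.mem_ofPred_eq, hq]
    exact le_orderStat_init_of_strictRank_last_lt hkn (e · ω) hω
  calc ENNReal.ofReal (1 - α) ≤ k / (n + 1) := by
        simpa [hk] using ENNReal.ofReal_le_natCeil_mul_div (1 - α) n.succ_ne_zero
    _ ≤ ℙ (A (Fin.last n)) := ENNReal.div_le_of_le_mul' hmass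
    _ ≤ _ := measure_mono hcover

/-- Split conformal prediction quantile lemma: for exchangeable
`e 0, …, e n`, the probability that `e n` is at most the `⌈(n+1)(1-α)⌉`-th
smallest among `e 0, …, e (n-1)` is at least `1 - α`. -/
theorem conformal_coverage_lower
    {Ω : Type*} [MeasureSpace Ω] [IsProbabilityMeasure (ℙ : Measure Ω)]
    {n : ℕ} (hn : 1 ≤ n) (α : ℝ) (hα : 0 < α) (hα1 : α < 1)
    (e : Fin (n + 1) → Ω → ℝ) (hmeas : ∀ i, Measurable (e i))
    (hexch : Exchangeable e)
    (k : ℕ) (hk : k = ⌈((n : ℝ) + 1) * (1 - α)⌉₊) (hkn : k ≤ n)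
    (qhat : Ω → ℝ)
    (hq : ∀ ω, qhat ω = orderStat (List.ofFn (fun i : Fin n => e i.castSucc ω)) k) :
    ENNReal.ofReal (1 - α) ≤ ℙ {ω | e (Fin.last n) ω ≤ qhat ω} :=
  conformal_coverage_lower_general α e hmeas hexch k hk hkn qhat hq
end

section
/- For exchangeable random variables $e_1,\dots,e_{n+1}$ with almost surely no ties, the rank of $e_{n+1}$ among $e_1,\dots,e_{n+1}$ is uniformly distributed on $\{1,\dots,n+1\}$. -/
open MeasureTheory ProbabilityTheory
open scoped ENNReal

/-!
The `n + 1` events `{rank of e j = r}` all have the same probability by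
exchangeability (swap `j` with the last index), and off the null set of ties each outcome
lies in exactly one of them, because distinct values get distinct ranks `1, …, n+1`.
So `n + 1` copies of the probability sum to `1`.
-/

open Finset

section RankAmong

variable {ι α : Type*} [Fintype ι] [LinearOrder α]

def rankAmong (x : ι → α) (j : ι) : ℕ :=
  #{i | x i ≤ x j}

theorem rankAmong_comp_perm (x : ι → α) (σ : Equiv.Perm ι) (j : ι) :
    rankAmong (x ∘ σ) j = rankAmong x (σ j) :=
  card_equiv σ (by simp)

theorem one_le_rankAmong (x : ι → α) (j : ι) : 1 ≤ rankAmong x j :=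
  card_pos.2 ⟨j, by simp⟩

theorem rankAmong_le_card (x : ι → α) (j : ι) : rankAmong x j ≤ Fintype.card ι :=
  (card_filter_le _ _).trans_eq card_univ

theorem rankAmong_lt_rankAmong {x : ι → α} {j k : ι} (h : x j < x k) :
    rankAmong x j < rankAmong x k := by
  refine card_lt_card ((ssubset_iff_of_subset fun i hi => ?_).2 ⟨k, by simp, by simp [h]⟩)
  simp only [mem_filter, mem_univ, true_and] at hi ⊢
  exact hi.trans h.le

theorem rankAmong_injective {x : ι → α} (hx : Function.Injective x) :
    Function.Injective (rankAmong x) := by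
  intro j k hjk
  rcases lt_trichotomy (x j) (x k) with hlt | heq | hgt
  · exact absurd hjk (rankAmong_lt_rankAmong hlt).ne
  · exact hx heq
  · exact absurd hjk (rankAmong_lt_rankAmong hgt).ne'

theorem image_rankAmong {x : ι → α} (hx : Function.Injective x) :
    univ.image (rankAmong x) = Icc 1 (Fintype.card ι) := by
  refine eq_of_subset_of_card_le (fun r hr => ?_) ?_
  · obtain ⟨j, -, rfl⟩ := mem_image.1 hr
    exact mem_Icc.2 ⟨one_le_rankAmong x j, rankAmong_le_card x j⟩
  · simp [card_image_of_injective _ (rankAmong_injective hx)]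

theorem existsUnique_rankAmong_eq {x : ι → α} (hx : Function.Injective x)
    {r : ℕ} (hr : r ∈ Icc 1 (Fintype.card ι)) : ∃! j, rankAmong x j = r := by
  obtain ⟨j, -, rfl⟩ := mem_image.1 ((image_rankAmong hx).symm ▸ hr)
  exact ⟨j, rfl, fun k hk => rankAmong_injective hx hk⟩

theorem measurable_rankAmong [TopologicalSpace α] [MeasurableSpace α]
    [OpensMeasurableSpace α] [OrderClosedTopology α] [SecondCountableTopology α] (j : ι) :
    Measurable fun x : ι → α => rankAmong x j := by
  simp_rw [rankAmong, card_filter]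
  exact measurable_sum _ fun i _ => Measurable.ite
    (measurableSet_le (measurable_pi_apply i) (measurable_pi_apply j))
    measurable_const measurable_const

end RankAmong

theorem sum_measure_eq_measure_univ_of_ae_existsUnique {Ω ι : Type*} [MeasurableSpace Ω]
    [Fintype ι] {μ : Measure Ω} {S : ι → Set Ω} (hS : ∀ j, NullMeasurableSet (S j) μ)
    (h : ∀ᵐ ω ∂μ, ∃! j, ω ∈ S j) :
    ∑ j, μ (S j) = μ Set.univ := by
  have hnull : μ {ω | ¬∃! j, ω ∈ S j} = 0 := ae_iff.1 h
  have hdisj : Pairwise (Function.onFun (AEDisjoint μ) S) := fun a b hab =>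
    measure_mono_null (fun ω (hω : ω ∈ S a ∩ S b) (hu : ∃! j, ω ∈ S j) =>
      hab (hu.unique hω.1 hω.2)) hnull
  have hcover : (⋃ j, S j) =ᵐ[μ] (Set.univ : Set Ω) :=
    ae_eq_univ.2 <| measure_mono_null (fun ω (hω : ω ∉ ⋃ j, S j) (hu : ∃! j, ω ∈ S j) =>
      hω (Set.mem_iUnion.2 hu.exists)) hnull
  rw [← measure_congr hcover, measure_iUnion₀ hdisj hS, tsum_fintype]

theorem Exchangeable.measure_preimage_comp_perm {Ω : Type*} [MeasureSpace Ω] {m : ℕ}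
    {e : Fin m → Ω → ℝ} (hexch : Exchangeable e) (hmeas : ∀ i, Measurable (e i))
    (σ : Equiv.Perm (Fin m)) {T : Set (Fin m → ℝ)} (hT : MeasurableSet T) :
    ℙ ((fun ω i => e (σ i) ω) ⁻¹' T) = ℙ ((fun ω i => e i ω) ⁻¹' T) := by
  rw [← Measure.map_apply (measurable_pi_lambda _ fun i => hmeas (σ i)) hT,
    ← Measure.map_apply (measurable_pi_lambda _ hmeas) hT, hexch σ]

theorem Exchangeable.measure_rankAmong_eq {Ω : Type*} [MeasureSpace Ω] {m : ℕ}
    {e : Fin m → Ω → ℝ} (hexch : Exchangeable e) (hmeas : ∀ i, Measurable (e i))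
    (j k : Fin m) (r : ℕ) :
    ℙ {ω | rankAmong (e · ω) j = r} = ℙ {ω | rankAmong (e · ω) k = r} := by
  have hT := measurable_rankAmong (α := ℝ) k (measurableSet_singleton r)
  calc ℙ {ω | rankAmong (e · ω) j = r}
      = ℙ ((fun ω i => e (Equiv.swap j k i) ω) ⁻¹' {x | rankAmong x k = r}) := by
        congr! 2
        ext ω
        change _ ↔ rankAmong ((e · ω) ∘ Equiv.swap j k) k = r
        rw [rankAmong_comp_perm, Equiv.swap_apply_right]
        rfl
    _ = ℙ {ω | rankAmong (e · ω) k = r} := hexch.measure_preimage_comp_perm hmeas _ hT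

/-- For exchangeable random variables `e 0, …, e n` with almost surely no ties,
the rank of `e n` among all of them (number of indices `i` with
`e i ≤ e n`) is uniformly distributed on `{1, …, n+1}`. -/
theorem rank_uniform
    {Ω : Type*} [MeasureSpace Ω] [IsProbabilityMeasure (ℙ : Measure Ω)]
    {n : ℕ}
    (e : Fin (n + 1) → Ω → ℝ) (hmeas : ∀ i, Measurable (e i))
    (hexch : Exchangeable e)
    (hnoties : ℙ {ω | ∃ i j : Fin (n + 1), i ≠ j ∧ e i ω = e j ω} = 0)
    (rank : Ω → ℕ)
    (hrank : ∀ ω, rank ω =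
      (Finset.univ.filter (fun i : Fin (n + 1) => e i ω ≤ e (Fin.last n) ω)).card) :
    ∀ r ∈ Finset.Icc 1 (n + 1),
      ℙ {ω | rank ω = r} = (((n : ℝ≥0∞) + 1))⁻¹ := by
  intro r hr
  have hinj : ∀ᵐ ω, Function.Injective (e · ω) :=
    ae_iff.2 (by simpa only [Function.not_injective_iff, and_comm] using hnoties)
  have hsum : ∑ j, ℙ {ω | rankAmong (e · ω) j = r} = 1 := by
    rw [← measure_univ (μ := (ℙ : Measure Ω))]
    refine sum_measure_eq_measure_univ_of_ae_existsUnique (fun j => ?_) ?_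
    · exact ((measurable_rankAmong j).comp (measurable_pi_lambda _ hmeas)
        (measurableSet_singleton r)).nullMeasurableSet
    · filter_upwards [hinj] with ω hω
      exact existsUnique_rankAmong_eq hω (by simpa using hr)
  simp_rw [hexch.measure_rankAmong_eq hmeas _ (Fin.last n), sum_const, card_univ,
    Fintype.card_fin, nsmul_eq_mul] at hsum
  have hrank_eq : {ω | rank ω = r} = {ω | rankAmong (e · ω) (Fin.last n) = r} := by
    simp only [hrank, rankAmong]
  rw [hrank_eq]
  exact ENNReal.eq_inv_of_mul_eq_one_left (by simpa [mul_comm] using hsum)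
end
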